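/- Suppose h and h̃ are two mixing densities that are both strictly positive in a neighborhood of zero. If there exists η > 0 such that the ratio u ↦ h(u)/h̃(u) is a strictly increasing function on (0, η], then λ_h ≤ λ_{h̃} (as elements of [0,∞]). -/

import Mathlib

open MeasureTheory Set
open scoped ENNReal

/-- A mixing density: a Borel measurable function on `(0,∞)` (extended to all of `ℝ`),
nonnegative on `(0,∞)`, integrating to 1 over `(0,∞)`. -/
def IsMixingDensity (h : ℝ → ℝ) : Prop :=
  Measurable h ∧ (∀ u ∈ Ioi (0:ℝ), 0 ≤ h u) ∧
    ∫⁻ u in Ioi (0:ℝ), ENNReal.ofReal (h u) = 1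

/-- `∫_0^∞ u^{-1/2} e^{-su/2} h(u) du`, as an element of `[0,∞]`. -/
noncomputable def mixNum (h : ℝ → ℝ) (s : ℝ) : ℝ≥0∞ :=
  ∫⁻ u in Ioi (0:ℝ), ENNReal.ofReal (u ^ (-(1:ℝ) / 2) * Real.exp (-(s * u) / 2) * h u)

/-- `∫_0^∞ u^{1/2} e^{-su/2} h(u) du`, as an element of `[0,∞]`. -/
noncomputable def mixDen (h : ℝ → ℝ) (s : ℝ) : ℝ≥0∞ :=
  ∫⁻ u in Ioi (0:ℝ), ENNReal.ofReal (u ^ ((1:ℝ) / 2) * Real.exp (-(s * u) / 2) * h u)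

/-- `h ∈ A(λ)`: there is a constant `k` with
`(∫_0^∞ u^{-1/2} e^{-su/2} h du)/(∫_0^∞ u^{1/2} e^{-su/2} h du) ≤ λ s + k` for all `s ≥ 0`. -/
def MemA (h : ℝ → ℝ) (l : ℝ) : Prop :=
  0 ≤ l ∧ ∃ k : ℝ, ∀ s : ℝ, 0 ≤ s → mixNum h s / mixDen h s ≤ ENNReal.ofReal (l * s + k)

/-- `λ_h ∈ [0,∞]`: the infimum of `{λ ∈ [0,∞) : h ∈ A(λ)}` (equal to `∞` if this set is empty). -/
noncomputable def lambdaH (h : ℝ → ℝ) : ℝ≥0∞ :=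
  sInf (ENNReal.ofReal '' {l : ℝ | MemA h l})

/-!
On a short interval `(0, c]` on which `h'` is positive and `h / h'` is nondecreasing,
Chebyshev's integral inequality for the weight `u^{1/2} e^{-su/2} h'(u) du`, applied to the
oppositely ordered functions `1 / u` and `h / h'`, shows that the ratio of the integrals truncated
to `(0, c]` is smaller for `h` than for `h'`. For `h'` the truncated ratio is still at most
`λ s + K`: for large `s` the part of the denominator beyond `c` is exponentially small compared with
the part near `0`, and moving `s` within `[0, 1]` changes the truncated integrals by a bounded
factor. Beyond `c` one has `u^{-1/2} ≤ c⁻¹ u^{1/2}`, so the tail of the numerator of `h` only adds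
the constant `c⁻¹`.
-/

lemma lintegral_mul_lintegral_le_of_forall_add_le {α : Type*} [MeasurableSpace α] {μ : Measure α}
    {A B C E : α → ℝ≥0∞} (hA : Measurable A) (hB : Measurable B) (hC : Measurable C)
    (hE : Measurable E)
    (h : ∀ᵐ u ∂μ, ∀ᵐ v ∂μ, A u * B v + A v * B u ≤ C u * E v + C v * E u) :
    (∫⁻ u, A u ∂μ) * ∫⁻ u, B u ∂μ ≤ (∫⁻ u, C u ∂μ) * ∫⁻ u, E u ∂μ := by
  have symmetrize : ∀ F G : α → ℝ≥0∞, Measurable F → Measurable G →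
      ∫⁻ u, ∫⁻ v, F u * G v + F v * G u ∂μ ∂μ = 2 * ((∫⁻ u, F u ∂μ) * ∫⁻ u, G u ∂μ) := by
    intro F G hF hG
    simp_rw [lintegral_add_left (hG.const_mul _), lintegral_const_mul _ hG,
      lintegral_mul_const _ hF]
    rw [lintegral_add_left (hF.mul_const _), lintegral_mul_const _ hF, lintegral_const_mul _ hG]
    ring
  have h2 := lintegral_mono_ae (h.mono fun u hu => lintegral_mono_ae hu)
  rw [symmetrize A B hA hB, symmetrize C E hC hE] at h2
  exact (ENNReal.mul_le_mul_iff_right two_ne_zero ENNReal.ofNat_ne_top).1 h2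

lemma ENNReal.ofReal_mul_add_ofReal_mul_le {a b c d x y z w : ℝ} (ha : 0 ≤ a) (hb : 0 ≤ b)
    (hc : 0 ≤ c) (hd : 0 ≤ d) (hx : 0 ≤ x) (hz : 0 ≤ z) (h : a * b + c * d ≤ x * y + z * w) :
    ENNReal.ofReal a * ENNReal.ofReal b + ENNReal.ofReal c * ENNReal.ofReal d ≤
      ENNReal.ofReal x * ENNReal.ofReal y + ENNReal.ofReal z * ENNReal.ofReal w := by
  rw [← ENNReal.ofReal_mul ha, ← ENNReal.ofReal_mul hc,
    ← ENNReal.ofReal_add (mul_nonneg ha hb) (mul_nonneg hc hd), ← ENNReal.ofReal_mul hx,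
    ← ENNReal.ofReal_mul hz]
  exact (ENNReal.ofReal_le_ofReal h).trans ENNReal.ofReal_add_le

lemma rpow_half_mul_exp_le_one {s u : ℝ} (hs : 1 ≤ s) (hu : 0 ≤ u) :
    u ^ ((1:ℝ) / 2) * Real.exp (-(s * u) / 2) ≤ 1 := by
  have hsqrt : u ^ ((1:ℝ) / 2) ≤ Real.exp (s * u / 2) := by
    rw [← Real.sqrt_eq_rpow]
    have h1 : √u ≤ 1 + u / 2 := by nlinarith [sq_nonneg (√u - 1), Real.sq_sqrt hu]
    have h2 : u ≤ s * u := by nlinarith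
    linarith [Real.add_one_le_exp (s * u / 2)]
  calc u ^ ((1:ℝ) / 2) * Real.exp (-(s * u) / 2)
      ≤ Real.exp (s * u / 2) * Real.exp (-(s * u) / 2) := by gcongr
    _ = 1 := by rw [← Real.exp_add, neg_div, add_neg_cancel, Real.exp_zero]

lemma linear_mul_exp_neg_le {l k c s : ℝ} (hl : 0 ≤ l) (hk : 0 ≤ k) (hc : 0 < c) (hs : 1 ≤ s) :
    (l * s + k) * Real.exp (-((s - 1) * (c / 2) / 2)) ≤ 4 * l / c + l + k := by
  set y := (s - 1) * (c / 2) / 2 with hy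
  have hy0 : 0 ≤ y := div_nonneg (mul_nonneg (by linarith) (by positivity)) zero_le_two
  have e1 : Real.exp (-y) ≤ 1 := Real.exp_le_one_iff.2 (by linarith)
  have e2 : y * Real.exp (-y) ≤ 1 := by
    rw [Real.exp_neg, ← div_eq_mul_inv, div_le_one (Real.exp_pos _)]
    linarith [Real.add_one_le_exp y]
  have hls : l * s = l + 4 * l / c * y := by
    rw [hy]
    field_simp
    ring
  nlinarith [mul_le_mul_of_nonneg_left e1 (by positivity : 0 ≤ l + k),
    mul_le_mul_of_nonneg_left e2 (by positivity : 0 ≤ 4 * l / c)]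

noncomputable def mixIntegrand (p : ℝ) (f : ℝ → ℝ) (s u : ℝ) : ℝ≥0∞ :=
  ENNReal.ofReal (u ^ p * Real.exp (-(s * u) / 2) * f u)

noncomputable def mixIntegral (p : ℝ) (f : ℝ → ℝ) (s : ℝ) (S : Set ℝ) : ℝ≥0∞ :=
  ∫⁻ u in S, mixIntegrand p f s u

lemma mixNum_eq_mixIntegral (f : ℝ → ℝ) (s : ℝ) :
    mixNum f s = mixIntegral (-(1:ℝ) / 2) f s (Ioi 0) := rfl

lemma mixDen_eq_mixIntegral (f : ℝ → ℝ) (s : ℝ) :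
    mixDen f s = mixIntegral ((1:ℝ) / 2) f s (Ioi 0) := rfl

section mixIntegral

variable {p q s t c : ℝ} {f : ℝ → ℝ} {S T : Set ℝ}

lemma measurable_mixIntegrand (hf : Measurable f) : Measurable (mixIntegrand p f s) := by
  unfold mixIntegrand
  fun_prop

lemma mixIntegral_mono_set (hST : S ⊆ T) : mixIntegral p f s S ≤ mixIntegral p f s T :=
  lintegral_mono_set hST

lemma mixIntegral_Ioi_eq_add (hc : 0 ≤ c) :
    mixIntegral p f s (Ioi 0) = mixIntegral p f s (Ioc 0 c) + mixIntegral p f s (Ioi c) := by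
  rw [mixIntegral, ← Ioc_union_Ioi_eq_Ioi hc,
    lintegral_union measurableSet_Ioi Ioc_disjoint_Ioi_same]
  rfl

lemma mixIntegral_pos (hf : Measurable f) (hc : 0 < c) (hpos : ∀ u ∈ Ioc 0 c, 0 < f u) :
    0 < mixIntegral p f s (Ioc 0 c) := by
  rw [mixIntegral, setLIntegral_pos_iff (measurable_mixIntegrand hf)]
  refine (show (0 : ℝ≥0∞) < volume (Ioc 0 c) by simpa using hc).trans_le
    (measure_mono fun u hu => ⟨?_, hu⟩)
  have := hpos u hu
  have := hu.1
  exact (ENNReal.ofReal_pos.2 (by positivity)).ne'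

lemma mixIntegral_le_ofReal_mul {a : ℝ} (ha : 0 ≤ a) (hS : MeasurableSet S)
    (hf : ∀ u ∈ S, 0 ≤ f u)
    (h : ∀ u ∈ S, u ^ p * Real.exp (-(s * u) / 2) ≤ a * (u ^ q * Real.exp (-(t * u) / 2))) :
    mixIntegral p f s S ≤ ENNReal.ofReal a * mixIntegral q f t S := by
  rw [mixIntegral, mixIntegral, ← lintegral_const_mul' _ _ ENNReal.ofReal_ne_top]
  refine setLIntegral_mono' hS fun u hu => ?_
  rw [mixIntegrand, mixIntegrand, ← ENNReal.ofReal_mul ha, ← mul_assoc]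
  exact ENNReal.ofReal_le_ofReal (mul_le_mul_of_nonneg_right (h u hu) (hf u hu))

lemma mixIntegral_anti (hS : MeasurableSet S) (hS0 : S ⊆ Ioi 0) (hf : ∀ u ∈ S, 0 ≤ f u)
    (hst : s ≤ t) : mixIntegral p f t S ≤ mixIntegral p f s S := by
  simpa using mixIntegral_le_ofReal_mul zero_le_one hS hf fun u hu => by
    have : 0 < u := hS0 hu
    rw [one_mul]
    gcongr

lemma mixIntegral_Ioc_le_exp_mul (hst : s ≤ t) (hf : ∀ u ∈ Ioc 0 c, 0 ≤ f u) :
    mixIntegral p f s (Ioc 0 c) ≤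
      ENNReal.ofReal (Real.exp ((t - s) * c / 2)) * mixIntegral p f t (Ioc 0 c) :=
  mixIntegral_le_ofReal_mul (Real.exp_pos _).le measurableSet_Ioc hf fun u hu => by
    have := hu.1
    rw [mul_left_comm, ← Real.exp_add]
    gcongr
    nlinarith [mul_le_mul_of_nonneg_left hu.2 (sub_nonneg.2 hst)]

lemma ofReal_exp_mul_mixIntegral_Ioc_le (hst : s ≤ t) (hf : ∀ u ∈ Ioc 0 c, 0 ≤ f u) :
    ENNReal.ofReal (Real.exp (-((t - s) * c / 2))) * mixIntegral p f s (Ioc 0 c) ≤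
      mixIntegral p f t (Ioc 0 c) :=
  calc ENNReal.ofReal (Real.exp (-((t - s) * c / 2))) * mixIntegral p f s (Ioc 0 c)
      ≤ ENNReal.ofReal (Real.exp (-((t - s) * c / 2))) *
          (ENNReal.ofReal (Real.exp ((t - s) * c / 2)) * mixIntegral p f t (Ioc 0 c)) := by
        gcongr
        exact mixIntegral_Ioc_le_exp_mul hst hf
    _ = mixIntegral p f t (Ioc 0 c) := by
        rw [← mul_assoc, ← ENNReal.ofReal_mul (Real.exp_pos _).le, ← Real.exp_add,
          neg_add_cancel, Real.exp_zero, ENNReal.ofReal_one, one_mul]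

lemma mixIntegral_Ioi_le_exp_mul (hc : 0 ≤ c) (hst : s ≤ t) (hf : ∀ u ∈ Ioi c, 0 ≤ f u) :
    mixIntegral p f t (Ioi c) ≤
      ENNReal.ofReal (Real.exp (-((t - s) * c / 2))) * mixIntegral p f s (Ioi c) :=
  mixIntegral_le_ofReal_mul (Real.exp_pos _).le measurableSet_Ioi hf fun u hu => by
    have hcu : c < u := hu
    have : 0 < u := hc.trans_lt hcu
    rw [mul_left_comm, ← Real.exp_add]
    gcongr
    nlinarith [mul_le_mul_of_nonneg_left hcu.le (sub_nonneg.2 hst)]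

end mixIntegral

lemma mixIntegrand_cross_le {f g : ℝ → ℝ} {s u v : ℝ} (hu : 0 < u) (huv : u ≤ v)
    (hfu : 0 ≤ f u) (hfv : 0 ≤ f v) (hgu : 0 ≤ g u) (hgv : 0 ≤ g v)
    (hfg : f u * g v ≤ f v * g u) :
    mixIntegrand (-(1:ℝ) / 2) f s u * mixIntegrand ((1:ℝ) / 2) g s v +
        mixIntegrand (-(1:ℝ) / 2) f s v * mixIntegrand ((1:ℝ) / 2) g s u ≤
      mixIntegrand (-(1:ℝ) / 2) g s u * mixIntegrand ((1:ℝ) / 2) f s v +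
        mixIntegrand (-(1:ℝ) / 2) g s v * mixIntegrand ((1:ℝ) / 2) f s u := by
  have hv : 0 < v := hu.trans_le huv
  have hweight : u ^ ((1:ℝ) / 2) * v ^ (-(1:ℝ) / 2) ≤ v ^ ((1:ℝ) / 2) * u ^ (-(1:ℝ) / 2) :=
    mul_le_mul (Real.rpow_le_rpow hu.le huv (by norm_num : (0:ℝ) ≤ 1 / 2))
      (Real.rpow_le_rpow_of_nonpos hu huv (by norm_num : -(1:ℝ) / 2 ≤ 0)) (by positivity)
      (by positivity)
  -- the right side minus the left side is `e_u e_v` times the product of these two differences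
  have key := mul_nonneg (mul_nonneg (Real.exp_pos (-(s * u) / 2)).le
    (Real.exp_pos (-(s * v) / 2)).le) (mul_nonneg (sub_nonneg.2 hweight) (sub_nonneg.2 hfg))
  exact ENNReal.ofReal_mul_add_ofReal_mul_le (by positivity) (by positivity) (by positivity)
    (by positivity) (by positivity) (by positivity) (by linarith)

/-- Chebyshev's integral inequality for the weight `u^{1/2} e^{-su/2} g(u) du` and the
oppositely ordered functions `1 / u` and `f / g`. -/
lemma mixIntegral_mul_mixIntegral_le {f g : ℝ → ℝ} {S : Set ℝ} (s : ℝ) (hf : Measurable f)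
    (hg : Measurable g) (hS : MeasurableSet S) (hS0 : S ⊆ Ioi 0) (hf0 : ∀ u ∈ S, 0 ≤ f u)
    (hg0 : ∀ u ∈ S, 0 < g u) (hmono : MonotoneOn (fun u => f u / g u) S) :
    mixIntegral (-(1:ℝ) / 2) f s S * mixIntegral ((1:ℝ) / 2) g s S ≤
      mixIntegral (-(1:ℝ) / 2) g s S * mixIntegral ((1:ℝ) / 2) f s S := by
  refine lintegral_mul_lintegral_le_of_forall_add_le (measurable_mixIntegrand hf)
    (measurable_mixIntegrand hg) (measurable_mixIntegrand hg) (measurable_mixIntegrand hf) ?_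
  have hfg : ∀ u ∈ S, ∀ v ∈ S, u ≤ v → f u * g v ≤ f v * g u := fun u hu v hv huv =>
    (div_le_div_iff₀ (hg0 u hu) (hg0 v hv)).1 (hmono hu hv huv)
  filter_upwards [ae_restrict_mem hS] with u hu
  filter_upwards [ae_restrict_mem hS] with v hv
  rcases le_total u v with huv | hvu
  · exact mixIntegrand_cross_le (hS0 hu) huv (hf0 u hu) (hf0 v hv) (hg0 u hu).le (hg0 v hv).le
      (hfg u hu v hv huv)
  · simpa only [add_comm] using mixIntegrand_cross_le (hS0 hv) hvu (hf0 v hv) (hf0 u hu)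
      (hg0 v hv).le (hg0 u hu).le (hfg v hv u hu hvu)

section IsMixingDensity

variable {f : ℝ → ℝ} {s c l : ℝ} {S : Set ℝ}

lemma IsMixingDensity.mixIntegral_zero_zero_le_one (hf : IsMixingDensity f) (hS : S ⊆ Ioi 0) :
    mixIntegral 0 f 0 S ≤ 1 := by
  simp only [mixIntegral, mixIntegrand, Real.rpow_zero, zero_mul, neg_zero, zero_div,
    Real.exp_zero, one_mul]
  exact hf.2.2 ▸ lintegral_mono_set hS

lemma IsMixingDensity.mixIntegral_le_one (hf : IsMixingDensity f) (hs : 1 ≤ s)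
    (hS : MeasurableSet S) (hS0 : S ⊆ Ioi 0) : mixIntegral ((1:ℝ) / 2) f s S ≤ 1 :=
  calc mixIntegral ((1:ℝ) / 2) f s S ≤ ENNReal.ofReal 1 * mixIntegral 0 f 0 S :=
        mixIntegral_le_ofReal_mul zero_le_one hS (fun u hu => hf.2.1 u (hS0 hu)) fun u hu => by
          simpa using rpow_half_mul_exp_le_one hs (hS0 hu).le
    _ ≤ 1 := by simpa using hf.mixIntegral_zero_zero_le_one hS0

lemma IsMixingDensity.mixIntegral_Ioc_ne_top (hf : IsMixingDensity f) (hs : 0 ≤ s) :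
    mixIntegral ((1:ℝ) / 2) f s (Ioc 0 c) ≠ ⊤ := by
  have hbound := mixIntegral_Ioc_le_exp_mul (p := (1:ℝ) / 2) (s := s) (c := c)
    (le_add_of_nonneg_right zero_le_one) fun u hu => hf.2.1 u hu.1
  refine ne_top_of_le_ne_top (ENNReal.mul_ne_top ENNReal.ofReal_ne_top ?_) hbound
  exact ne_top_of_le_ne_top ENNReal.one_ne_top
    (hf.mixIntegral_le_one (by linarith) measurableSet_Ioc Ioc_subset_Ioi_self)

lemma IsMixingDensity.mixIntegral_Ioi_le_exp (hf : IsMixingDensity f) (hc : 0 ≤ c) (hs : 1 ≤ s) :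
    mixIntegral ((1:ℝ) / 2) f s (Ioi c) ≤ ENNReal.ofReal (Real.exp (-((s - 1) * c / 2))) :=
  calc mixIntegral ((1:ℝ) / 2) f s (Ioi c)
      ≤ ENNReal.ofReal (Real.exp (-((s - 1) * c / 2))) * mixIntegral ((1:ℝ) / 2) f 1 (Ioi c) :=
        mixIntegral_Ioi_le_exp_mul hc hs fun u hu => hf.2.1 u (hc.trans_lt hu)
    _ ≤ ENNReal.ofReal (Real.exp (-((s - 1) * c / 2))) * 1 := by
        gcongr
        exact hf.mixIntegral_le_one le_rfl measurableSet_Ioi (Ioi_subset_Ioi hc)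
    _ = _ := mul_one _

lemma IsMixingDensity.exists_mul_mixIntegral_Ioi_le (hf : IsMixingDensity f) (hc : 0 < c)
    (hpos : ∀ u ∈ Ioc 0 c, 0 < f u) (hl : 0 ≤ l) {k : ℝ} (hk : 0 ≤ k) :
    ∃ C, 0 ≤ C ∧ ∀ s, 1 ≤ s → ENNReal.ofReal (l * s + k) * mixIntegral ((1:ℝ) / 2) f s (Ioi c) ≤
      ENNReal.ofReal C * mixIntegral ((1:ℝ) / 2) f s (Ioc 0 c) := by
  set c₀ := mixIntegral ((1:ℝ) / 2) f 1 (Ioc 0 (c / 2))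
  have hc₀top : c₀ ≠ ⊤ := ne_top_of_le_ne_top ENNReal.one_ne_top
    (hf.mixIntegral_le_one le_rfl measurableSet_Ioc Ioc_subset_Ioi_self)
  have hc₀ : 0 < c₀.toReal := ENNReal.toReal_pos
    (mixIntegral_pos hf.1 (half_pos hc) fun u hu => hpos u ⟨hu.1, hu.2.trans (by linarith)⟩).ne'
    hc₀top
  set M := 4 * l / c + l + k
  refine ⟨M / c₀.toReal, by positivity, fun s hs => ?_⟩
  -- compared with `s = 1`, the weight shrinks by at least `e^{-2y}` on `(c, ∞)`
  -- and by at most `e^{-y}` on `(0, c/2]`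
  set y := (s - 1) * (c / 2) / 2 with hy
  have htail : mixIntegral ((1:ℝ) / 2) f s (Ioi c) ≤
      ENNReal.ofReal (Real.exp (-y) * Real.exp (-y)) := by
    rw [← Real.exp_add, hy]
    convert hf.mixIntegral_Ioi_le_exp hc.le hs using 3
    ring
  have hhead : ENNReal.ofReal (Real.exp (-y)) * c₀ ≤ mixIntegral ((1:ℝ) / 2) f s (Ioc 0 c) :=
    (ofReal_exp_mul_mixIntegral_Ioc_le hs fun u hu => hf.2.1 u hu.1).trans
      (mixIntegral_mono_set (Ioc_subset_Ioc_right (by linarith)))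
  calc ENNReal.ofReal (l * s + k) * mixIntegral ((1:ℝ) / 2) f s (Ioi c)
      ≤ ENNReal.ofReal ((l * s + k) * Real.exp (-y) * Real.exp (-y)) := by
        rw [mul_assoc, ENNReal.ofReal_mul (by positivity)]
        gcongr
    _ ≤ ENNReal.ofReal (M / c₀.toReal * (Real.exp (-y) * c₀.toReal)) := by
        refine ENNReal.ofReal_le_ofReal ?_
        rw [mul_comm (Real.exp _), ← mul_assoc, div_mul_cancel₀ _ hc₀.ne']
        exact mul_le_mul_of_nonneg_right (linear_mul_exp_neg_le hl hk hc hs) (Real.exp_pos _).le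
    _ = ENNReal.ofReal (M / c₀.toReal) * (ENNReal.ofReal (Real.exp (-y)) * c₀) := by
        rw [ENNReal.ofReal_mul (by positivity), ENNReal.ofReal_mul (Real.exp_pos _).le,
          ENNReal.ofReal_toReal hc₀top]
    _ ≤ ENNReal.ofReal (M / c₀.toReal) * mixIntegral ((1:ℝ) / 2) f s (Ioc 0 c) := by
        gcongr

end IsMixingDensity

lemma exists_mixIntegral_Ioc_le_of_one_le {f : ℝ → ℝ} {c l K : ℝ} (hc : 0 ≤ c)
    (hf : ∀ u ∈ Ioc 0 c, 0 ≤ f u) (hl : 0 ≤ l) (hK : 0 ≤ K)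
    (h : ∀ s, 1 ≤ s → mixIntegral (-(1:ℝ) / 2) f s (Ioc 0 c) ≤
      ENNReal.ofReal (l * s + K) * mixIntegral ((1:ℝ) / 2) f s (Ioc 0 c)) :
    ∃ K', 0 ≤ K' ∧ ∀ s, 0 ≤ s → mixIntegral (-(1:ℝ) / 2) f s (Ioc 0 c) ≤
      ENNReal.ofReal (l * s + K') * mixIntegral ((1:ℝ) / 2) f s (Ioc 0 c) := by
  have hexp : 1 ≤ Real.exp (c / 2) := Real.one_le_exp (by positivity)
  refine ⟨Real.exp (c / 2) * (l + K), by positivity, fun s hs => ?_⟩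
  rcases le_total 1 s with hs1 | hs1
  · refine (h s hs1).trans ?_
    gcongr
    nlinarith
  have hshift : Real.exp ((1 - s) * c / 2) ≤ Real.exp (c / 2) := by
    gcongr
    nlinarith
  calc mixIntegral (-(1:ℝ) / 2) f s (Ioc 0 c)
      ≤ ENNReal.ofReal (Real.exp ((1 - s) * c / 2)) * mixIntegral (-(1:ℝ) / 2) f 1 (Ioc 0 c) :=
        mixIntegral_Ioc_le_exp_mul hs1 hf
    _ ≤ ENNReal.ofReal (Real.exp ((1 - s) * c / 2)) *
          (ENNReal.ofReal (l * 1 + K) * mixIntegral ((1:ℝ) / 2) f s (Ioc 0 c)) := by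
        gcongr
        exact (h 1 le_rfl).trans
          (by gcongr; exact mixIntegral_anti measurableSet_Ioc Ioc_subset_Ioi_self hf hs1)
    _ = ENNReal.ofReal (Real.exp ((1 - s) * c / 2) * (l + K)) *
          mixIntegral ((1:ℝ) / 2) f s (Ioc 0 c) := by
        rw [mul_one, ← mul_assoc, ← ENNReal.ofReal_mul (Real.exp_pos _).le]
    _ ≤ _ := by
        gcongr
        nlinarith

lemma MemA.exists_mixIntegral_Ioc_le {f : ℝ → ℝ} {l c : ℝ} (hA : MemA f l)
    (hf : IsMixingDensity f) (hc : 0 < c) (hpos : ∀ u ∈ Ioc 0 c, 0 < f u) :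
    ∃ K, 0 ≤ K ∧ ∀ s, 0 ≤ s → mixIntegral (-(1:ℝ) / 2) f s (Ioc 0 c) ≤
      ENNReal.ofReal (l * s + K) * mixIntegral ((1:ℝ) / 2) f s (Ioc 0 c) := by
  obtain ⟨hl, k, hk⟩ := hA
  set k' := max k 0
  obtain ⟨C, hC0, hC⟩ := hf.exists_mul_mixIntegral_Ioi_le hc hpos hl (le_max_right k 0)
  refine exists_mixIntegral_Ioc_le_of_one_le hc.le (fun u hu => hf.2.1 u hu.1) hl
    (add_nonneg (le_max_right k 0) hC0) fun s hs => ?_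
  have hls : 0 ≤ l * s + k' := add_nonneg (mul_nonneg hl (by linarith)) (le_max_right k 0)
  have hglobal : mixNum f s ≤ ENNReal.ofReal (l * s + k') * mixDen f s := by
    refine (ENNReal.div_le_iff_le_mul (Or.inr ENNReal.ofReal_ne_top) (Or.inl ?_)).1
      ((hk s (by linarith)).trans (ENNReal.ofReal_le_ofReal (by simp [k'])))
    exact ne_top_of_le_ne_top ENNReal.one_ne_top
      (hf.mixIntegral_le_one hs measurableSet_Ioi subset_rfl)
  calc mixIntegral (-(1:ℝ) / 2) f s (Ioc 0 c) ≤ mixNum f s :=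
        mixIntegral_mono_set Ioc_subset_Ioi_self
    _ ≤ ENNReal.ofReal (l * s + k') * mixIntegral ((1:ℝ) / 2) f s (Ioc 0 c) +
          ENNReal.ofReal (l * s + k') * mixIntegral ((1:ℝ) / 2) f s (Ioi c) := by
        rwa [mixDen_eq_mixIntegral, mixIntegral_Ioi_eq_add hc.le, mul_add] at hglobal
    _ ≤ ENNReal.ofReal (l * s + k') * mixIntegral ((1:ℝ) / 2) f s (Ioc 0 c) +
          ENNReal.ofReal C * mixIntegral ((1:ℝ) / 2) f s (Ioc 0 c) :=
        add_le_add le_rfl (hC s hs)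
    _ = ENNReal.ofReal (l * s + (k' + C)) * mixIntegral ((1:ℝ) / 2) f s (Ioc 0 c) := by
        rw [← add_mul, ← ENNReal.ofReal_add hls hC0, add_assoc]

lemma MemA.of_monotoneOn_div {f g : ℝ → ℝ} {l c : ℝ} (hA : MemA g l) (hf : IsMixingDensity f)
    (hg : IsMixingDensity g) (hc : 0 < c) (hgpos : ∀ u ∈ Ioc 0 c, 0 < g u)
    (hmono : MonotoneOn (fun u => f u / g u) (Ioc 0 c)) : MemA f l := by
  obtain ⟨K, hK, hlocal⟩ := hA.exists_mixIntegral_Ioc_le hg hc hgpos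
  refine ⟨hA.1, K + c⁻¹, fun s hs => ENNReal.div_le_of_le_mul ?_⟩
  have hls : 0 ≤ l * s + K := add_nonneg (mul_nonneg hA.1 hs) hK
  have hhead : mixIntegral (-(1:ℝ) / 2) f s (Ioc 0 c) ≤
      ENNReal.ofReal (l * s + K) * mixIntegral ((1:ℝ) / 2) f s (Ioc 0 c) := by
    refine (ENNReal.mul_le_mul_iff_left (mixIntegral_pos hg.1 hc hgpos).ne'
      (hg.mixIntegral_Ioc_ne_top hs)).1 ?_
    calc mixIntegral (-(1:ℝ) / 2) f s (Ioc 0 c) * mixIntegral ((1:ℝ) / 2) g s (Ioc 0 c)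
        ≤ mixIntegral (-(1:ℝ) / 2) g s (Ioc 0 c) * mixIntegral ((1:ℝ) / 2) f s (Ioc 0 c) :=
          mixIntegral_mul_mixIntegral_le s hf.1 hg.1 measurableSet_Ioc Ioc_subset_Ioi_self
            (fun u hu => hf.2.1 u hu.1) hgpos hmono
      _ ≤ ENNReal.ofReal (l * s + K) * mixIntegral ((1:ℝ) / 2) g s (Ioc 0 c) *
            mixIntegral ((1:ℝ) / 2) f s (Ioc 0 c) := by gcongr; exact hlocal s hs
      _ = _ := by ring
  have htail : mixIntegral (-(1:ℝ) / 2) f s (Ioi c) ≤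
      ENNReal.ofReal c⁻¹ * mixIntegral ((1:ℝ) / 2) f s (Ioi c) :=
    mixIntegral_le_ofReal_mul (by positivity) measurableSet_Ioi
      (fun u hu => hf.2.1 u (hc.trans hu)) fun u hu => by
        have hcu : c < u := hu
        have hu0 : 0 < u := hc.trans hcu
        rw [← mul_assoc]
        gcongr
        rw [show -(1:ℝ) / 2 = -1 + 1 / 2 by norm_num, Real.rpow_add hu0, Real.rpow_neg_one]
        gcongr
  calc mixNum f s
      = mixIntegral (-(1:ℝ) / 2) f s (Ioc 0 c) + mixIntegral (-(1:ℝ) / 2) f s (Ioi c) :=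
        mixIntegral_Ioi_eq_add hc.le
    _ ≤ ENNReal.ofReal (l * s + K) * mixDen f s + ENNReal.ofReal c⁻¹ * mixDen f s := by
        gcongr
        · exact hhead.trans (by gcongr; exact mixIntegral_mono_set Ioc_subset_Ioi_self)
        · exact htail.trans (by gcongr; exact mixIntegral_mono_set (Ioi_subset_Ioi hc.le))
    _ = ENNReal.ofReal (l * s + (K + c⁻¹)) * mixDen f s := by
        rw [← add_mul, ← ENNReal.ofReal_add hls (by positivity), add_assoc]

theorem lambdaH_le_of_ratio_strictMono_general (h h' : ℝ → ℝ)
    (hmix : IsMixingDensity h) (hmix' : IsMixingDensity h')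
    (hpos' : ∃ ε > 0, ∀ u ∈ Ioo (0:ℝ) ε, 0 < h' u)
    (hmono : ∃ η > 0, StrictMonoOn (fun u => h u / h' u) (Ioc (0:ℝ) η)) :
    lambdaH h ≤ lambdaH h' := by
  obtain ⟨ε, hε, hε_pos⟩ := hpos'
  obtain ⟨η, hη, hη_mono⟩ := hmono
  have hc : 0 < min η (ε / 2) := lt_min hη (half_pos hε)
  have hgpos : ∀ u ∈ Ioc 0 (min η (ε / 2)), 0 < h' u := fun u hu =>
    hε_pos u ⟨hu.1, hu.2.trans_lt ((min_le_right _ _).trans_lt (half_lt_self hε))⟩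
  have hmono' : MonotoneOn (fun u => h u / h' u) (Ioc 0 (min η (ε / 2))) :=
    hη_mono.monotoneOn.mono (Ioc_subset_Ioc_right (min_le_left _ _))
  exact sInf_le_sInf (image_mono fun l hl => MemA.of_monotoneOn_div hl hmix hmix' hc hgpos hmono')

/-- If two mixing densities `h`, `h̃` are strictly positive in a neighborhood of zero and
`u ↦ h(u)/h̃(u)` is strictly increasing on `(0, η]` for some `η > 0`, then `λ_h ≤ λ_h̃`. -/
theorem lambdaH_le_of_ratio_strictMono (h h' : ℝ → ℝ)
    (hmix : IsMixingDensity h) (hmix' : IsMixingDensity h')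
    (hpos : ∃ ε > 0, ∀ u ∈ Ioo (0:ℝ) ε, 0 < h u)
    (hpos' : ∃ ε > 0, ∀ u ∈ Ioo (0:ℝ) ε, 0 < h' u)
    (hmono : ∃ η > 0, StrictMonoOn (fun u => h u / h' u) (Ioc (0:ℝ) η)) :
    lambdaH h ≤ lambdaH h' :=
  lambdaH_le_of_ratio_strictMono_general h h' hmix hmix' hpos' hmono
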